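/- Let (X,d) be a metric space and let ν be a Borel measure on X whose support is all of X and which is finite on bounded sets, satisfying the Bishop–Gromov inequality with parameters (K,N), where K ≤ 0 and 1 < N < ∞. Let ε > 0 and let p₁,…,p_{n₀} be distinct points of X such that the open balls B(p_k, ε/2), k = 1,…,n₀, are pairwise disjoint. Then for every x ∈ X, the number of indices j ∈ {1,…,n₀} with B(x,ε) ∩ B(p_j,ε) ≠ ∅ is at most (∫₀^{9ε/2} S_K^N(t) dt) / (∫₀^{ε/2} S_K^N(t) dt). -/

import Mathlib

open MeasureTheory Metric

/-- The model volume density `S_K^N` for `K ≤ 0`, `1 < N < ∞`. -/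
noncomputable def SKN (K N t : ℝ) : ℝ :=
  if K = 0 then t ^ (N - 1)
  else Real.sinh (Real.sqrt (|K| / (N - 1)) * t) ^ (N - 1)

/-- A Borel measure `ν` of full support satisfies the Bishop–Gromov inequality with
parameters `(K, N)` if for every `x` the function
`r ↦ ν(B(x,r)) / ∫₀^r S_K^N(t) dt` is nonincreasing on `(0, ∞)`. -/
def BishopGromov {X : Type*} [MetricSpace X] [MeasurableSpace X]
    (ν : Measure X) (K N : ℝ) : Prop :=
  ∀ x : X, AntitoneOn
    (fun r => (ν (ball x r)).toReal / ∫ t in (0:ℝ)..r, SKN K N t) (Set.Ioi 0)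

/-!
Write `a` and `b` for the model volumes `∫₀^{ε/2} S_K^N` and `∫₀^{9ε/2} S_K^N`. If `B(x, ε)` meets
`B(p_j, ε)`, then `dist (p_j, x) < 2ε`, so `B(p_j, ε/2) ⊆ B(x, 5ε/2) ⊆ B(p_j, 9ε/2)`. Bishop–Gromov
at `p_j` gives `ν B(x, 5ε/2) ≤ ν B(p_j, 9ε/2) ≤ (b/a) ν B(p_j, ε/2)`, while the disjoint balls
`B(p_j, ε/2)` have total mass at most `ν B(x, 5ε/2)`. Summing over the counted indices and dividing
by `ν B(x, 5ε/2) > 0` bounds their number by `b/a`.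
-/

lemma SKN_pos {K N : ℝ} (hN : 1 < N) {t : ℝ} (ht : 0 < t) : 0 < SKN K N t := by
  unfold SKN
  split_ifs with h
  · exact Real.rpow_pos_of_pos ht _
  · exact Real.rpow_pos_of_pos (Real.sinh_pos_iff.2 (mul_pos
      (Real.sqrt_pos.2 (div_pos (abs_pos.2 h) (by linarith))) ht)) _

lemma continuous_SKN {K N : ℝ} (hN : 1 < N) : Continuous (SKN K N) := by
  unfold SKN
  split_ifs
  · exact continuous_iff_continuousAt.2 fun t =>
      Real.continuousAt_rpow_const _ _ (Or.inr (by linarith))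
  · exact continuous_iff_continuousAt.2 fun t =>
      (Real.continuousAt_rpow_const _ _ (Or.inr (by linarith))).comp
        ((Real.continuous_sinh.comp (continuous_const.mul continuous_id)).continuousAt)

lemma integral_SKN_pos {K N : ℝ} (hN : 1 < N) {r : ℝ} (hr : 0 < r) :
    0 < ∫ t in (0:ℝ)..r, SKN K N t :=
  intervalIntegral.intervalIntegral_pos_of_pos_on
    ((continuous_SKN hN).intervalIntegrable _ _) (fun _ ht => SKN_pos hN ht.1) hr

lemma BishopGromov.measure_ball_toReal_le {X : Type*} [MetricSpace X] [MeasurableSpace X]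
    {ν : Measure X} {K N : ℝ} (hN : 1 < N) (hBG : BishopGromov ν K N) (y : X)
    {r R : ℝ} (hr : 0 < r) (hrR : r ≤ R) :
    (ν (ball y R)).toReal ≤
      (∫ t in (0:ℝ)..R, SKN K N t) / (∫ t in (0:ℝ)..r, SKN K N t) * (ν (ball y r)).toReal := by
  have h := hBG y hr (hr.trans_le hrR) hrR
  rw [div_le_iff₀ (integral_SKN_pos hN (hr.trans_le hrR))] at h
  exact h.trans_eq (by ring)

lemma sum_measure_toReal_le_of_pairwiseDisjoint {α ι : Type*} [MeasurableSpace α]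
    (μ : Measure α) {s : Finset ι} {A : ι → Set α} {B : Set α} (hB : μ B ≠ ⊤)
    (hA : ∀ i ∈ s, MeasurableSet (A i)) (hdisj : (s : Set ι).PairwiseDisjoint A)
    (hsub : ∀ i ∈ s, A i ⊆ B) :
    ∑ i ∈ s, (μ (A i)).toReal ≤ (μ B).toReal := by
  have hunion : ∑ i ∈ s, μ (A i) ≤ μ B := by
    rw [← measure_biUnion_finset hdisj hA]
    exact measure_mono (Set.iUnion₂_subset hsub)
  rw [← ENNReal.toReal_sum fun i hi => ne_top_of_le_ne_top hB (measure_mono (hsub i hi))]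
  exact ENNReal.toReal_mono hB hunion

theorem stmt_1_general {X : Type*} [MetricSpace X] [MeasurableSpace X] [BorelSpace X]
    (ν : Measure X)
    (hfull : ∀ x : X, ∀ r > (0:ℝ), 0 < ν (ball x r))
    (hbdd : ∀ s : Set X, Bornology.IsBounded s → ν s < ⊤)
    (K N : ℝ) (hN : 1 < N)
    (hBG : BishopGromov ν K N)
    (ε : ℝ) (hε : 0 < ε)
    (n₀ : ℕ) (p : Fin n₀ → X)
    (hdisj : Pairwise fun i j =>
      Disjoint (ball (p i) (ε / 2)) (ball (p j) (ε / 2)))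
    (x : X) :
    ({j : Fin n₀ | (ball x ε ∩ ball (p j) ε).Nonempty}.ncard : ℝ) ≤
      (∫ t in (0:ℝ)..(9 * ε / 2), SKN K N t) / ∫ t in (0:ℝ)..(ε / 2), SKN K N t := by
  classical
  set q := (∫ t in (0:ℝ)..(9 * ε / 2), SKN K N t) / ∫ t in (0:ℝ)..(ε / 2), SKN K N t
  set J := Finset.univ.filter fun j : Fin n₀ => (ball x ε ∩ ball (p j) ε).Nonempty
  have hJ : {j : Fin n₀ | (ball x ε ∩ ball (p j) ε).Nonempty}.ncard = J.card := by
    rw [← Set.ncard_coe_finset, Finset.coe_filter_univ]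
  have hdist : ∀ j ∈ J, dist (p j) x < 2 * ε := fun j hj => by
    have := dist_lt_add_of_nonempty_ball_inter_ball (Finset.mem_filter.1 hj).2
    rw [dist_comm]; linarith
  set v := (ν (ball x (5 * ε / 2))).toReal
  have hv : 0 < v :=
    ENNReal.toReal_pos (hfull x _ (by linarith)).ne' (hbdd _ isBounded_ball).ne
  have hlower : ∀ j ∈ J, v ≤ q * (ν (ball (p j) (ε / 2))).toReal := fun j hj =>
    (ENNReal.toReal_mono (hbdd _ isBounded_ball).ne (measure_mono
      (ball_subset_ball' (by rw [dist_comm]; linarith [hdist j hj])))).trans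
    (hBG.measure_ball_toReal_le hN (p j) (by linarith) (by linarith))
  have hpack : ∑ j ∈ J, (ν (ball (p j) (ε / 2))).toReal ≤ v :=
    sum_measure_toReal_le_of_pairwiseDisjoint ν (hbdd _ isBounded_ball).ne
      (fun _ _ => measurableSet_ball) (fun _ _ _ _ hij => hdisj hij)
      (fun j hj => ball_subset_ball' (by linarith [hdist j hj]))
  have hq : 0 ≤ q := (div_pos (integral_SKN_pos hN (by linarith))
    (integral_SKN_pos hN (by linarith))).le
  have hcount : (J.card : ℝ) * v ≤ q * v :=
    calc (J.card : ℝ) * v ≤ ∑ j ∈ J, q * (ν (ball (p j) (ε / 2))).toReal := by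
          simpa only [nsmul_eq_mul] using Finset.card_nsmul_le_sum J _ v hlower
      _ = q * ∑ j ∈ J, (ν (ball (p j) (ε / 2))).toReal := (Finset.mul_sum _ _ _).symm
      _ ≤ q * v := mul_le_mul_of_nonneg_left hpack hq
  rw [hJ]
  exact le_of_mul_le_mul_right hcount hv

theorem stmt_1 {X : Type*} [MetricSpace X] [MeasurableSpace X] [BorelSpace X]
    (ν : Measure X)
    (hfull : ∀ x : X, ∀ r > (0:ℝ), 0 < ν (ball x r))
    (hbdd : ∀ s : Set X, Bornology.IsBounded s → ν s < ⊤)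
    (K N : ℝ) (hK : K ≤ 0) (hN : 1 < N)
    (hBG : BishopGromov ν K N)
    (ε : ℝ) (hε : 0 < ε)
    (n₀ : ℕ) (p : Fin n₀ → X) (hinj : Function.Injective p)
    (hdisj : Pairwise fun i j =>
      Disjoint (ball (p i) (ε / 2)) (ball (p j) (ε / 2)))
    (x : X) :
    ({j : Fin n₀ | (ball x ε ∩ ball (p j) ε).Nonempty}.ncard : ℝ) ≤
      (∫ t in (0:ℝ)..(9 * ε / 2), SKN K N t) / ∫ t in (0:ℝ)..(ε / 2), SKN K N t :=
  stmt_1_general ν hfull hbdd K N hN hBG ε hε n₀ p hdisj x
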